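/- For fixed unit vectors v₁, v₂ in ℝ^d (d ≥ 2) and δ > 0, let U_δ(v₁,v₂) = {ω ∈ S^{d-1} : |⟨ω,v₁⟩| ≤ δ and |⟨ω,v₂⟩| ≤ δ}. If α(v₁,v₂) denotes the acute angle between v₁ and v₂, then the spherical measure of U_δ(v₁,v₂) is at most C·min{δ, δ²/sin α(v₁,v₂)} for a constant C depending only on d. -/

import Mathlib

open MeasureTheory Real Set
open scoped RealInnerProductSpace ENNReal NNReal

open MeasureTheory Real Set
open scoped RealInnerProductSpace ENNReal NNReal

lemma aux_sqrt_lip {A B m : ℝ} (hA : 0 ≤ A) (hB : 0 ≤ B) (hm : 0 < m)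
    (h1 : m ≤ Real.sqrt A) (h2 : m ≤ Real.sqrt B) :
    |Real.sqrt A - Real.sqrt B| ≤ |A - B| / (2 * m) := by
  have hsum : 2 * m ≤ Real.sqrt A + Real.sqrt B := by linarith
  have hsum0 : (0:ℝ) ≤ Real.sqrt A + Real.sqrt B := by positivity
  have key : |Real.sqrt A - Real.sqrt B| * (2 * m) ≤ |A - B| := by
    calc |Real.sqrt A - Real.sqrt B| * (2 * m)
        ≤ |Real.sqrt A - Real.sqrt B| * (Real.sqrt A + Real.sqrt B) := by
          apply mul_le_mul_of_nonneg_left hsum (abs_nonneg _)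
      _ = |(Real.sqrt A - Real.sqrt B) * (Real.sqrt A + Real.sqrt B)| := by
          rw [abs_mul, abs_of_nonneg hsum0]
      _ = |A - B| := by
          rw [show (Real.sqrt A - Real.sqrt B) * (Real.sqrt A + Real.sqrt B)
              = Real.sqrt A ^ 2 - Real.sqrt B ^ 2 by ring,
            Real.sq_sqrt hA, Real.sq_sqrt hB]
  rw [le_div_iff₀ (by positivity)]
  exact key

lemma eucl_norm_sq {n : ℕ} (x : EuclideanSpace ℝ (Fin n)) :
    ‖x‖ ^ 2 = ∑ j, x j ^ 2 := by
  rw [EuclideanSpace.norm_eq, Real.sq_sqrt (by positivity)]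
  simp [sq_abs]

lemma coord_le_norm {n : ℕ} (x : EuclideanSpace ℝ (Fin n)) (i : Fin n) :
    |x i| ≤ ‖x‖ := by
  have h : x i ^ 2 ≤ ‖x‖ ^ 2 := by
    rw [eucl_norm_sq]
    exact Finset.single_le_sum (f := fun j => x j ^ 2) (fun j _ => sq_nonneg _)
      (Finset.mem_univ i)
  calc |x i| = Real.sqrt (x i ^ 2) := (Real.sqrt_sq_eq_abs _).symm
    _ ≤ Real.sqrt (‖x‖ ^ 2) := Real.sqrt_le_sqrt h
    _ = ‖x‖ := Real.sqrt_sq (norm_nonneg _)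

noncomputable def graphMap (n : ℕ) (j : Fin (n+1)) (ε : ℝ) :
    EuclideanSpace ℝ (Fin n) → EuclideanSpace ℝ (Fin (n+1)) :=
  fun x => WithLp.toLp 2 (Fin.insertNth j (ε * Real.sqrt (1 - ‖x‖^2)) (WithLp.ofLp x))

lemma graph_lip (n : ℕ) (j : Fin (n+1)) (ε : ℝ) (hε : |ε| = 1) :
    LipschitzOnWith ((n:ℝ≥0)+2) (graphMap n j ε)
      {x : EuclideanSpace ℝ (Fin n) | ‖x‖^2 ≤ 1 - 1/(n+1)} := by
  rw [lipschitzOnWith_iff_dist_le_mul]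
  intro x hx y hy
  simp only [Set.mem_setOf_eq] at hx hy
  set G := graphMap n j ε with hG
  have hnp : (0:ℝ) < 1/(n+1) := by positivity
  have hx1 : ‖x‖ ≤ 1 := by nlinarith [norm_nonneg x]
  have hy1 : ‖y‖ ≤ 1 := by nlinarith [norm_nonneg y]
  have hA : (1:ℝ)/(n+1) ≤ 1 - ‖x‖^2 := by linarith
  have hB : (1:ℝ)/(n+1) ≤ 1 - ‖y‖^2 := by linarith
  set m : ℝ := Real.sqrt (1/(n+1)) with hmdef
  have hm : 0 < m := Real.sqrt_pos.mpr hnp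
  have hmx : m ≤ Real.sqrt (1 - ‖x‖^2) := Real.sqrt_le_sqrt hA
  have hmy : m ≤ Real.sqrt (1 - ‖y‖^2) := Real.sqrt_le_sqrt hB
  -- bound on the difference of the sqrt part
  have hsq : |Real.sqrt (1 - ‖x‖^2) - Real.sqrt (1 - ‖y‖^2)|
      ≤ |(1 - ‖x‖^2) - (1 - ‖y‖^2)| / (2*m) :=
    aux_sqrt_lip (by linarith) (by linarith) hm hmx hmy
  have hdiff : |(1 - ‖x‖^2) - (1 - ‖y‖^2)| ≤ 2 * ‖x - y‖ := by
    have h1 : |‖x‖ - ‖y‖| ≤ ‖x - y‖ := abs_norm_sub_norm_le x y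
    have h2 : |(1 - ‖x‖^2) - (1 - ‖y‖^2)| = |‖x‖ - ‖y‖| * (‖x‖ + ‖y‖) := by
      rw [← abs_of_nonneg (by positivity : (0:ℝ) ≤ ‖x‖ + ‖y‖), ← abs_mul]
      rw [show (1 - ‖x‖^2) - (1 - ‖y‖^2) = -((‖x‖ - ‖y‖) * (‖x‖ + ‖y‖)) by ring, abs_neg]
    rw [h2]
    calc |‖x‖ - ‖y‖| * (‖x‖ + ‖y‖) ≤ ‖x - y‖ * 2 := by
          apply mul_le_mul h1 (by linarith) (by positivity) (norm_nonneg _)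
      _ = 2 * ‖x - y‖ := by ring
  have hg : |ε * Real.sqrt (1 - ‖x‖^2) - ε * Real.sqrt (1 - ‖y‖^2)| ≤ ‖x - y‖ / m := by
    rw [← mul_sub, abs_mul, hε, one_mul]
    calc |Real.sqrt (1 - ‖x‖^2) - Real.sqrt (1 - ‖y‖^2)|
        ≤ |(1 - ‖x‖^2) - (1 - ‖y‖^2)| / (2*m) := hsq
      _ ≤ (2 * ‖x - y‖) / (2*m) := by
          apply div_le_div_of_nonneg_right hdiff (by positivity) |>.trans_eq rfl
      _ = ‖x - y‖ / m := by field_simp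
  -- expand the distance
  have hexp : dist (G x) (G y) ^ 2
      = (ε * Real.sqrt (1 - ‖x‖^2) - ε * Real.sqrt (1 - ‖y‖^2))^2 + ‖x - y‖^2 := by
    rw [dist_eq_norm, eucl_norm_sq (G x - G y),
      Fin.sum_univ_succAbove (fun i => ((G x - G y) i)^2) j]
    congr 1
    · rw [PiLp.sub_apply]
      simp [hG, graphMap, Fin.insertNth_apply_same]
    · rw [eucl_norm_sq (x - y)]
      congr 1
      funext k
      rw [PiLp.sub_apply, PiLp.sub_apply]
      simp [hG, graphMap, Fin.insertNth_apply_succAbove]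
  have hminv : (1/m)^2 = (n:ℝ)+1 := by
    rw [hmdef, div_pow, one_pow, Real.sq_sqrt hnp.le, one_div, one_div, inv_inv]
  have hfin : dist (G x) (G y) ^ 2 ≤ (((n:ℝ)+2) * dist x y)^2 := by
    rw [hexp, dist_eq_norm]
    have h3 : (ε * Real.sqrt (1 - ‖x‖^2) - ε * Real.sqrt (1 - ‖y‖^2))^2 ≤ (‖x - y‖/m)^2 := by
      rw [← sq_abs]
      exact pow_le_pow_left₀ (abs_nonneg _) hg 2
    have h4 : (‖x - y‖/m)^2 = ((n:ℝ)+1) * ‖x - y‖^2 := by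
      rw [div_pow, ← hminv]; field_simp
    nlinarith [norm_nonneg (x - y), sq_nonneg ‖x - y‖]
  have := Real.sqrt_le_sqrt hfin
  rw [Real.sqrt_sq (dist_nonneg), Real.sqrt_sq (by positivity)] at this
  calc dist (G x) (G y) ≤ ((n:ℝ)+2) * dist x y := this
    _ = ((n:ℝ≥0)+2 : ℝ≥0) * dist x y := by push_cast; ring

lemma core (n : ℕ) (hn : 1 ≤ n) (j : Fin (n+1)) (u : Fin (n+1) → ℝ) :
    μH[(n:ℝ)] {ω : EuclideanSpace ℝ (Fin (n+1)) |
        ‖ω‖ = 1 ∧ (1:ℝ)/(n+1) ≤ ω j ^ 2 ∧ ∀ i, |ω i| ≤ u i}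
      ≤ 2 * ((n:ℝ≥0∞)+2)^(n:ℝ) * ((n:ℝ≥0∞)+2)^(n:ℝ) *
          ∏ k : Fin n, ENNReal.ofReal (2 * min (u (j.succAbove k)) 1) := by
  set T := {ω : EuclideanSpace ℝ (Fin (n+1)) |
      ‖ω‖ = 1 ∧ (1:ℝ)/(n+1) ≤ ω j ^ 2 ∧ ∀ i, |ω i| ≤ u i} with hT
  set E := {x : EuclideanSpace ℝ (Fin n) |
      ‖x‖^2 ≤ 1 - 1/(n+1) ∧ ∀ k, |x k| ≤ min (u (j.succAbove k)) 1} with hE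
  set D := {x : EuclideanSpace ℝ (Fin n) | ‖x‖^2 ≤ 1 - 1/(n+1)} with hD
  -- inclusion into the two graph images
  have hsub : T ⊆ graphMap n j 1 '' E ∪ graphMap n j (-1) '' E := by
    rintro ω ⟨hω1, hωj, hωu⟩
    set x : EuclideanSpace ℝ (Fin n) := WithLp.toLp 2 (fun k => ω (j.succAbove k)) with hx
    have hsum : ‖ω‖^2 = ω j ^ 2 + ∑ k, x k ^ 2 := by
      rw [eucl_norm_sq ω, Fin.sum_univ_succAbove (fun i => ω i ^ 2) j]
    have hxn : ‖x‖^2 = 1 - ω j ^ 2 := by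
      rw [eucl_norm_sq x]
      rw [hω1] at hsum
      linarith
    have hxE : x ∈ E := by
      refine ⟨by rw [hxn]; linarith, fun k => ?_⟩
      refine le_min (hωu _) ?_
      calc |x k| = |ω (j.succAbove k)| := rfl
        _ ≤ ‖ω‖ := coord_le_norm ω _
        _ = 1 := hω1
    have hrec : ∀ ε : ℝ, ε * Real.sqrt (1 - ‖x‖^2) = ω j →
        ω ∈ graphMap n j ε '' E := by
      intro ε hεω
      refine ⟨x, hxE, ?_⟩
      have : graphMap n j ε x = WithLp.toLp 2 (Fin.insertNth j (ω j) (fun k => ω (j.succAbove k))) := by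
        rw [graphMap, hεω]
      rw [this]
      exact congrArg (WithLp.toLp 2) (Fin.insertNth_self_removeNth j (WithLp.ofLp ω))
    have hsq2 : Real.sqrt (1 - ‖x‖^2) = |ω j| := by
      rw [hxn, show (1:ℝ) - (1 - ω j ^2) = ω j ^ 2 by ring, Real.sqrt_sq_eq_abs]
    rcases le_or_gt 0 (ω j) with h | h
    · exact Or.inl (hrec 1 (by rw [hsq2, one_mul, abs_of_nonneg h]))
    · exact Or.inr (hrec (-1) (by rw [hsq2, abs_of_neg h]; ring))
  -- measure of each image
  have himg : ∀ ε : ℝ, |ε| = 1 →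
      μH[(n:ℝ)] (graphMap n j ε '' E)
        ≤ ((n:ℝ≥0∞)+2)^(n:ℝ) * ((n:ℝ≥0∞)+2)^(n:ℝ) *
            ∏ k : Fin n, ENNReal.ofReal (2 * min (u (j.succAbove k)) 1) := by
    intro ε hε
    have hESubD : E ⊆ D := fun x hx => hx.1
    have hlip := (graph_lip n j ε hε).mono hESubD
    have h1 : μH[(n:ℝ)] (graphMap n j ε '' E)
        ≤ (((n:ℝ≥0)+2 : ℝ≥0) : ℝ≥0∞)^(n:ℝ) * μH[(n:ℝ)] E :=
      hlip.hausdorffMeasure_image_le (by positivity)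
    -- compare Hausdorff measure on Euclidean space with the sup-metric pi space
    have h2 : μH[(n:ℝ)] E
        ≤ (((Fintype.card (Fin n) : ℝ≥0) ^ ((1:ℝ≥0∞)/2).toReal : ℝ≥0) : ℝ≥0∞)^(n:ℝ) *
            μH[(n:ℝ)] ((WithLp.equiv 2 (Fin n → ℝ)) '' E) :=
      (PiLp.antilipschitzWith_ofLp 2 (fun _ : Fin n => ℝ)).le_hausdorffMeasure_image
        (by positivity) E
    have h3 : μH[(n:ℝ)] ((WithLp.equiv 2 (Fin n → ℝ)) '' E)
        = volume ((WithLp.equiv 2 (Fin n → ℝ)) '' E) := by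
      rw [← hausdorffMeasure_pi_real (ι := Fin n)]
      congr 1
      simp [Fintype.card_fin]
    have h4 : volume ((WithLp.equiv 2 (Fin n → ℝ)) '' E)
        ≤ ∏ k : Fin n, ENNReal.ofReal (2 * min (u (j.succAbove k)) 1) := by
      have hbox : (WithLp.equiv 2 (Fin n → ℝ)) '' E ⊆
          Set.pi univ (fun k => Icc (-(min (u (j.succAbove k)) 1)) (min (u (j.succAbove k)) 1)) := by
        rintro z ⟨x, hxE, rfl⟩
        intro k _
        have := hxE.2 k
        rw [abs_le] at this
        exact ⟨this.1, this.2⟩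
      calc volume ((WithLp.equiv 2 (Fin n → ℝ)) '' E)
          ≤ volume (Set.pi univ (fun k => Icc (-(min (u (j.succAbove k)) 1))
              (min (u (j.succAbove k)) 1))) := measure_mono hbox
        _ = ∏ k : Fin n, volume (Icc (-(min (u (j.succAbove k)) 1)) (min (u (j.succAbove k)) 1)) :=
            volume_pi_pi _
        _ = ∏ k : Fin n, ENNReal.ofReal (2 * min (u (j.succAbove k)) 1) := by
            refine Finset.prod_congr rfl (fun k _ => ?_)
            rw [Real.volume_Icc]
            congr 1
            ring
    -- the antilipschitz constant is at most n+2
    have hK2 : (((Fintype.card (Fin n) : ℝ≥0) ^ ((1:ℝ≥0∞)/2).toReal : ℝ≥0) : ℝ≥0∞)^(n:ℝ)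
        ≤ ((n:ℝ≥0∞)+2)^(n:ℝ) := by
      apply ENNReal.rpow_le_rpow _ (by positivity)
      rw [ENNReal.coe_rpow_of_nonneg _ (by positivity)]
      have hcard : ((Fintype.card (Fin n) : ℝ≥0) : ℝ≥0∞) = (n : ℝ≥0∞) := by
        simp [Fintype.card_fin]
      rw [hcard]
      have h12 : ((1:ℝ≥0∞)/2).toReal = 1/2 := by simp
      rw [h12]
      calc (n : ℝ≥0∞) ^ ((1:ℝ)/2) ≤ (n : ℝ≥0∞) ^ (1:ℝ) :=
            ENNReal.rpow_le_rpow_of_exponent_le (by exact_mod_cast hn) (by norm_num)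
        _ = (n : ℝ≥0∞) := ENNReal.rpow_one _
        _ ≤ (n:ℝ≥0∞)+2 := le_self_add
    have hK1 : ((((n:ℝ≥0)+2 : ℝ≥0)) : ℝ≥0∞)^(n:ℝ) = ((n:ℝ≥0∞)+2)^(n:ℝ) := by
      norm_cast
    calc μH[(n:ℝ)] (graphMap n j ε '' E)
        ≤ (((n:ℝ≥0)+2 : ℝ≥0) : ℝ≥0∞)^(n:ℝ) * μH[(n:ℝ)] E := h1
      _ ≤ (((n:ℝ≥0)+2 : ℝ≥0) : ℝ≥0∞)^(n:ℝ) *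
            ((((Fintype.card (Fin n) : ℝ≥0) ^ ((1:ℝ≥0∞)/2).toReal : ℝ≥0) : ℝ≥0∞)^(n:ℝ) *
              μH[(n:ℝ)] ((WithLp.equiv 2 (Fin n → ℝ)) '' E)) := by
            exact mul_le_mul_right h2 _
      _ ≤ ((n:ℝ≥0∞)+2)^(n:ℝ) * (((n:ℝ≥0∞)+2)^(n:ℝ) *
            ∏ k : Fin n, ENNReal.ofReal (2 * min (u (j.succAbove k)) 1)) := by
            rw [hK1]
            apply mul_le_mul_right
            rw [h3] at *
            exact mul_le_mul' hK2 h4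
      _ = ((n:ℝ≥0∞)+2)^(n:ℝ) * ((n:ℝ≥0∞)+2)^(n:ℝ) *
            ∏ k : Fin n, ENNReal.ofReal (2 * min (u (j.succAbove k)) 1) := by ring
  calc μH[(n:ℝ)] T ≤ μH[(n:ℝ)] (graphMap n j 1 '' E ∪ graphMap n j (-1) '' E) :=
        measure_mono hsub
    _ ≤ μH[(n:ℝ)] (graphMap n j 1 '' E) + μH[(n:ℝ)] (graphMap n j (-1) '' E) :=
        measure_union_le _ _
    _ ≤ ((n:ℝ≥0∞)+2)^(n:ℝ) * ((n:ℝ≥0∞)+2)^(n:ℝ) *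
            ∏ k : Fin n, ENNReal.ofReal (2 * min (u (j.succAbove k)) 1) +
        ((n:ℝ≥0∞)+2)^(n:ℝ) * ((n:ℝ≥0∞)+2)^(n:ℝ) *
            ∏ k : Fin n, ENNReal.ofReal (2 * min (u (j.succAbove k)) 1) :=
        add_le_add (himg 1 (by norm_num)) (himg (-1) (by norm_num))
    _ = 2 * ((n:ℝ≥0∞)+2)^(n:ℝ) * ((n:ℝ≥0∞)+2)^(n:ℝ) *
            ∏ k : Fin n, ENNReal.ofReal (2 * min (u (j.succAbove k)) 1) := by ring

lemma prod_bound₁ {n : ℕ} (f : Fin n → ℝ) (h0 : ∀ k, 0 ≤ f k) (h1 : ∀ k, f k ≤ 1)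
    (k₀ : Fin n) :
    ∏ k, ENNReal.ofReal (2 * f k) ≤ ENNReal.ofReal (2^n * f k₀) := by
  have hn : 0 < n := k₀.pos
  rw [← Finset.mul_prod_erase Finset.univ _ (Finset.mem_univ k₀)]
  have hrest : ∏ k ∈ Finset.univ.erase k₀, ENNReal.ofReal (2 * f k)
      ≤ ENNReal.ofReal 2 ^ (n - 1) := by
    calc ∏ k ∈ Finset.univ.erase k₀, ENNReal.ofReal (2 * f k)
        ≤ ∏ _k ∈ Finset.univ.erase k₀, ENNReal.ofReal 2 :=
          Finset.prod_le_prod' (fun k _ => ENNReal.ofReal_le_ofReal (by nlinarith [h0 k, h1 k]))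
      _ = ENNReal.ofReal 2 ^ (n - 1) := by
          rw [Finset.prod_const, Finset.card_erase_of_mem (Finset.mem_univ k₀),
            Finset.card_univ, Fintype.card_fin]
  calc ENNReal.ofReal (2 * f k₀) * ∏ k ∈ Finset.univ.erase k₀, ENNReal.ofReal (2 * f k)
      ≤ ENNReal.ofReal (2 * f k₀) * ENNReal.ofReal 2 ^ (n - 1) :=
        mul_le_mul_right hrest _
    _ = ENNReal.ofReal ((2 * f k₀) * 2 ^ (n - 1)) := by
        rw [← ENNReal.ofReal_pow (by norm_num), ← ENNReal.ofReal_mul (by nlinarith [h0 k₀])]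
    _ ≤ ENNReal.ofReal (2^n * f k₀) := by
        apply ENNReal.ofReal_le_ofReal
        have h2 : (2:ℝ) * 2 ^ (n-1) = 2^n := by
          rw [← pow_succ']
          congr 1
          omega
        nlinarith [h0 k₀, pow_pos (by norm_num : (0:ℝ) < 2) (n-1)]

lemma prod_bound₂ {n : ℕ} (f : Fin n → ℝ) (h0 : ∀ k, 0 ≤ f k) (h1 : ∀ k, f k ≤ 1)
    (k₀ k₁ : Fin n) (hne : k₀ ≠ k₁) :
    ∏ k, ENNReal.ofReal (2 * f k) ≤ ENNReal.ofReal (2^n * (f k₀ * f k₁)) := by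
  have hn2 : 2 ≤ n := by
    have := Finset.card_le_univ ({k₀, k₁} : Finset (Fin n))
    rw [Finset.card_pair hne] at this
    simpa using this
  have hmem : k₁ ∈ Finset.univ.erase k₀ := Finset.mem_erase.mpr ⟨hne.symm, Finset.mem_univ _⟩
  rw [← Finset.mul_prod_erase Finset.univ _ (Finset.mem_univ k₀),
    ← Finset.mul_prod_erase _ _ hmem]
  have hrest : ∏ k ∈ (Finset.univ.erase k₀).erase k₁, ENNReal.ofReal (2 * f k)
      ≤ ENNReal.ofReal 2 ^ (n - 2) := by
    calc ∏ k ∈ (Finset.univ.erase k₀).erase k₁, ENNReal.ofReal (2 * f k)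
        ≤ ∏ _k ∈ (Finset.univ.erase k₀).erase k₁, ENNReal.ofReal 2 :=
          Finset.prod_le_prod' (fun k _ => ENNReal.ofReal_le_ofReal (by nlinarith [h0 k, h1 k]))
      _ = ENNReal.ofReal 2 ^ (n - 2) := by
          rw [Finset.prod_const, Finset.card_erase_of_mem hmem,
            Finset.card_erase_of_mem (Finset.mem_univ k₀), Finset.card_univ, Fintype.card_fin]
          congr 1
  calc ENNReal.ofReal (2 * f k₀) * (ENNReal.ofReal (2 * f k₁) *
        ∏ k ∈ (Finset.univ.erase k₀).erase k₁, ENNReal.ofReal (2 * f k))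
      ≤ ENNReal.ofReal (2 * f k₀) * (ENNReal.ofReal (2 * f k₁) * ENNReal.ofReal 2 ^ (n - 2)) := by
        exact mul_le_mul_right (mul_le_mul_right hrest _) _
    _ = ENNReal.ofReal ((2 * f k₀) * ((2 * f k₁) * 2 ^ (n - 2))) := by
        rw [← ENNReal.ofReal_pow (by norm_num), ← ENNReal.ofReal_mul (by nlinarith [h0 k₁]),
          ← ENNReal.ofReal_mul (by nlinarith [h0 k₀, h0 k₁])]
    _ ≤ ENNReal.ofReal (2^n * (f k₀ * f k₁)) := by
        apply ENNReal.ofReal_le_ofReal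
        have h2 : (2:ℝ) * (2 * 2 ^ (n-2)) = 2^n := by
          rw [← pow_succ', ← pow_succ']
          congr 1
          omega
        have e : 2 * f k₀ * (2 * f k₁ * 2 ^ (n-2)) = (2 * (2 * 2^(n-2))) * (f k₀ * f k₁) := by
          ring
        rw [e, h2]

lemma fin_val_one (n : ℕ) (hn : 1 ≤ n) : (1 : Fin (n+1)).val = 1 := by
  rw [Fin.val_one']
  exact Nat.mod_eq_of_lt (by omega)

lemma key (n : ℕ) (hn : 1 ≤ n) :
    ∃ CE : ℝ≥0∞, CE ≠ ⊤ ∧ ∀ a b : ℝ, 0 < a → 0 < b →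
      μH[(n:ℝ)] {ω : EuclideanSpace ℝ (Fin (n+1)) | ‖ω‖ = 1 ∧ |ω 0| ≤ a ∧ |ω 1| ≤ b}
        ≤ CE * ENNReal.ofReal (min a 1 * min b 1) := by
  classical
  set Kc : ℝ≥0∞ := 2 * ((n:ℝ≥0∞)+2)^(n:ℝ) * ((n:ℝ≥0∞)+2)^(n:ℝ) with hKc
  have hKcTop : Kc ≠ ⊤ := by
    have h2 : ((n:ℝ≥0∞)+2)^(n:ℝ) ≠ ⊤ :=
      ENNReal.rpow_ne_top_of_nonneg (by positivity) (by finiteness)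
    exact ENNReal.mul_ne_top (ENNReal.mul_ne_top (by finiteness) h2) h2
  refine ⟨((n:ℝ≥0∞)+1) * Kc * ENNReal.ofReal (2^n * (n+1)), ?_, ?_⟩
  · exact ENNReal.mul_ne_top (ENNReal.mul_ne_top (by finiteness) hKcTop) ENNReal.ofReal_ne_top
  intro a b ha hb
  set ma := min a 1 with hma
  set mb := min b 1 with hmb
  have hma0 : 0 < ma := lt_min ha one_pos
  have hmb0 : 0 < mb := lt_min hb one_pos
  have hma1 : ma ≤ 1 := min_le_right _ _
  have hmb1 : mb ≤ 1 := min_le_right _ _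
  have hone : (1 : Fin (n+1)) ≠ 0 := by
    have h := fin_val_one n hn
    intro hcontra
    rw [hcontra] at h
    simp at h
  set u : Fin (n+1) → ℝ := fun i => if i = 0 then ma else if i = 1 then mb else 1 with hu
  have hu0 : u 0 = ma := by simp [hu]
  have hu1 : u 1 = mb := by simp [hu, hone]
  have hules : ∀ i, u i ≤ 1 := by
    intro i
    rw [hu]
    dsimp only
    split_ifs <;> simp [hma1, hmb1]
  have hupos : ∀ i, 0 ≤ u i := by
    intro i
    rw [hu]
    dsimp only
    split_ifs <;> [exact hma0.le; exact hmb0.le; norm_num]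
  set T : Fin (n+1) → Set (EuclideanSpace ℝ (Fin (n+1))) := fun j =>
    {ω | ‖ω‖ = 1 ∧ (1:ℝ)/(n+1) ≤ ω j ^ 2 ∧ ∀ i, |ω i| ≤ u i} with hTdef
  set A := {ω : EuclideanSpace ℝ (Fin (n+1)) | ‖ω‖ = 1 ∧ |ω 0| ≤ a ∧ |ω 1| ≤ b} with hA
  -- covering
  have hcover : A ⊆ ⋃ j, T j := by
    rintro ω ⟨hω1, hωa, hωb⟩
    have hcoord : ∀ i, |ω i| ≤ u i := by
      intro i
      have hle1 : |ω i| ≤ 1 := (coord_le_norm ω i).trans_eq hω1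
      rw [hu]
      dsimp only
      split_ifs with h h'
      · subst h; exact le_min hωa hle1
      · subst h'; exact le_min hωb hle1
      · exact hle1
    have hex : ∃ j, (1:ℝ)/(n+1) ≤ ω j ^ 2 := by
      by_contra hcon
      push_neg at hcon
      have hsum : ∑ j, ω j ^ 2 = 1 := by rw [← eucl_norm_sq, hω1]; norm_num
      have hlt : ∑ j, ω j ^ 2 < ∑ _j : Fin (n+1), (1:ℝ)/(n+1) :=
        Finset.sum_lt_sum_of_nonempty Finset.univ_nonempty (fun j _ => hcon j)
      rw [Finset.sum_const, Finset.card_univ, Fintype.card_fin, nsmul_eq_mul, hsum] at hlt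
      have heq : ((n+1:ℕ):ℝ) * (1/(n+1)) = 1 := by
        push_cast
        field_simp
      rw [heq] at hlt
      exact lt_irrefl 1 hlt
    obtain ⟨j, hj⟩ := hex
    exact Set.mem_iUnion.mpr ⟨j, ⟨hω1, hj, hcoord⟩⟩
  have hnp : (0:ℝ) < (n:ℝ) + 1 := by positivity
  have hpow : (0:ℝ) < 2^n := by positivity
  -- per-piece bound
  have hpiece : ∀ j, μH[(n:ℝ)] (T j) ≤ Kc * ENNReal.ofReal (2^n * ((n+1) * (ma * mb))) := by
    intro j
    have hf0 : ∀ i : Fin (n+1), 0 ≤ min (u i) 1 := fun i => le_min (hupos _) zero_le_one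
    have hf1 : ∀ i : Fin (n+1), min (u i) 1 ≤ 1 := fun i => min_le_right _ _
    have hcore := core n hn j u
    have hfeq : ∀ i, min (u i) 1 = u i := fun i => min_eq_left (hules i)
    have hTsub : T j = {ω : EuclideanSpace ℝ (Fin (n+1)) |
        ‖ω‖ = 1 ∧ (1:ℝ)/(n+1) ≤ ω j ^ 2 ∧ ∀ i, |ω i| ≤ u i} := rfl
    have hprod : (∏ k : Fin n, ENNReal.ofReal (2 * min (u (j.succAbove k)) 1)
        ≤ ENNReal.ofReal (2^n * ((n+1) * (ma * mb)))) ∨ T j = ∅ := by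
      by_cases hj0 : j = 0
      · subst hj0
        by_cases hbig : 1 ≤ ((n:ℝ)+1) * ma^2
        · left
          set k0 : Fin n := ⟨0, by omega⟩ with hk0def
          have hk0 : (0 : Fin (n+1)).succAbove k0 = 1 := by
            rw [Fin.succAbove_of_le_castSucc _ _ (by simp)]
            ext
            rw [Fin.val_succ, fin_val_one n hn]
          have hfk0 : min (u ((0 : Fin (n+1)).succAbove k0)) 1 = mb := by
            rw [hk0, hfeq, hu1]
          calc ∏ k : Fin n, ENNReal.ofReal (2 * min (u ((0 : Fin (n+1)).succAbove k)) 1)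
              ≤ ENNReal.ofReal (2^n * min (u ((0 : Fin (n+1)).succAbove k0)) 1) :=
                prod_bound₁ _ (fun k => hf0 _) (fun k => hf1 _) k0
            _ ≤ ENNReal.ofReal (2^n * ((n+1) * (ma * mb))) := by
                apply ENNReal.ofReal_le_ofReal
                rw [hfk0]
                have h5 : 1 ≤ ((n:ℝ)+1) * ma := by nlinarith
                have h6 : mb ≤ ((n:ℝ)+1) * (ma * mb) := by nlinarith
                nlinarith
        · right
          rw [hTsub]
          rw [Set.eq_empty_iff_forall_notMem]
          rintro ω ⟨hω1, hωj, hωu⟩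
          push_neg at hbig
          have h7 : |ω 0| ≤ ma := (hωu 0).trans_eq hu0
          have h8 : ω 0 ^ 2 ≤ ma ^ 2 := by
            rw [← sq_abs]
            exact pow_le_pow_left₀ (abs_nonneg _) h7 2
          have h9 : (1:ℝ)/(n+1) ≤ ma^2 := le_trans hωj h8
          have h10 := (div_le_iff₀ hnp).mp h9
          nlinarith
      · by_cases hj1 : j = 1
        · subst hj1
          by_cases hbig : 1 ≤ ((n:ℝ)+1) * mb^2
          · left
            set k0 : Fin n := ⟨0, by omega⟩ with hk0def
            have hk0 : (1 : Fin (n+1)).succAbove k0 = 0 := by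
              rw [Fin.succAbove_of_castSucc_lt _ _ (by
                rw [Fin.lt_iff_val_lt_val, fin_val_one n hn]
                simp [hk0def])]
              ext
              simp [hk0def]
            have hfk0 : min (u ((1 : Fin (n+1)).succAbove k0)) 1 = ma := by
              rw [hk0, hfeq, hu0]
            calc ∏ k : Fin n, ENNReal.ofReal (2 * min (u ((1 : Fin (n+1)).succAbove k)) 1)
                ≤ ENNReal.ofReal (2^n * min (u ((1 : Fin (n+1)).succAbove k0)) 1) :=
                  prod_bound₁ _ (fun k => hf0 _) (fun k => hf1 _) k0
              _ ≤ ENNReal.ofReal (2^n * ((n+1) * (ma * mb))) := by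
                  apply ENNReal.ofReal_le_ofReal
                  rw [hfk0]
                  have h5 : 1 ≤ ((n:ℝ)+1) * mb := by nlinarith
                  have h6 : ma ≤ ((n:ℝ)+1) * (ma * mb) := by nlinarith
                  nlinarith
          · right
            rw [hTsub]
            rw [Set.eq_empty_iff_forall_notMem]
            rintro ω ⟨hω1, hωj, hωu⟩
            push_neg at hbig
            have h7 : |ω 1| ≤ mb := (hωu 1).trans_eq hu1
            have h8 : ω 1 ^ 2 ≤ mb ^ 2 := by
              rw [← sq_abs]
              exact pow_le_pow_left₀ (abs_nonneg _) h7 2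
            have h9 : (1:ℝ)/(n+1) ≤ mb^2 := le_trans hωj h8
            have h10 := (div_le_iff₀ hnp).mp h9
            nlinarith
        · left
          have hjv : 2 ≤ j.val := by
            have h1 : j.val ≠ 0 := fun h => hj0 (Fin.ext (by simp [h]))
            have h2 : j.val ≠ 1 := by
              intro h
              apply hj1
              ext
              rw [fin_val_one n hn, h]
            omega
          have hn2 : 2 ≤ n := by
            have := j.isLt
            omega
          set k0 : Fin n := ⟨0, by omega⟩ with hk0def
          set k1 : Fin n := ⟨1, by omega⟩ with hk1def
          have hne : k0 ≠ k1 := by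
            simp [hk0def, hk1def, Fin.ext_iff]
          have hk0 : j.succAbove k0 = 0 := by
            rw [Fin.succAbove_of_castSucc_lt _ _ (by
              rw [Fin.lt_iff_val_lt_val]
              simp only [Fin.coe_castSucc, hk0def]
              omega)]
            ext
            simp [hk0def]
          have hk1 : j.succAbove k1 = 1 := by
            rw [Fin.succAbove_of_castSucc_lt _ _ (by
              rw [Fin.lt_iff_val_lt_val]
              simp only [Fin.coe_castSucc, hk1def]
              omega)]
            ext
            rw [Fin.coe_castSucc, fin_val_one n (by omega)]
          have hfk0 : min (u (j.succAbove k0)) 1 = ma := by rw [hk0, hfeq, hu0]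
          have hfk1 : min (u (j.succAbove k1)) 1 = mb := by rw [hk1, hfeq, hu1]
          calc ∏ k : Fin n, ENNReal.ofReal (2 * min (u (j.succAbove k)) 1)
              ≤ ENNReal.ofReal (2^n * (min (u (j.succAbove k0)) 1 * min (u (j.succAbove k1)) 1)) :=
                prod_bound₂ _ (fun k => hf0 _) (fun k => hf1 _) k0 k1 hne
            _ ≤ ENNReal.ofReal (2^n * ((n+1) * (ma * mb))) := by
                apply ENNReal.ofReal_le_ofReal
                rw [hfk0, hfk1]
                nlinarith [mul_nonneg (mul_nonneg hpow.le (mul_pos hma0 hmb0).le)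
                  (Nat.cast_nonneg (α := ℝ) n)]
    rcases hprod with hp | hempty
    · calc μH[(n:ℝ)] (T j)
          ≤ 2 * ((n:ℝ≥0∞)+2)^(n:ℝ) * ((n:ℝ≥0∞)+2)^(n:ℝ) *
            ∏ k : Fin n, ENNReal.ofReal (2 * min (u (j.succAbove k)) 1) := hcore
        _ ≤ Kc * ENNReal.ofReal (2^n * ((n+1) * (ma * mb))) := by
            rw [hKc]
            exact mul_le_mul_right hp _
    · rw [hempty]
      simp
  -- sum up
  calc μH[(n:ℝ)] A ≤ μH[(n:ℝ)] (⋃ j, T j) := measure_mono hcover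
    _ ≤ ∑ j, μH[(n:ℝ)] (T j) := measure_iUnion_fintype_le _ _
    _ ≤ ∑ _j : Fin (n+1), Kc * ENNReal.ofReal (2^n * ((n+1) * (ma * mb))) :=
        Finset.sum_le_sum (fun j _ => hpiece j)
    _ = (n+1 : ℝ≥0∞) * (Kc * ENNReal.ofReal (2^n * ((n+1) * (ma * mb)))) := by
        rw [Finset.sum_const, Finset.card_univ, Fintype.card_fin, nsmul_eq_mul]
        push_cast
        ring
    _ = ((n:ℝ≥0∞)+1) * Kc * ENNReal.ofReal (2^n * (n+1)) * ENNReal.ofReal (ma * mb) := by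
        rw [show (2:ℝ)^n * ((n+1) * (ma * mb)) = (2^n * (n+1)) * (ma * mb) by ring,
          ENNReal.ofReal_mul (by positivity)]
        ring

lemma transfer (n : ℕ) (hn : 1 ≤ n) (CE : ℝ≥0∞)
    (hCE : ∀ a b : ℝ, 0 < a → 0 < b →
      μH[(n:ℝ)] {ω : EuclideanSpace ℝ (Fin (n+1)) | ‖ω‖ = 1 ∧ |ω 0| ≤ a ∧ |ω 1| ≤ b}
        ≤ CE * ENNReal.ofReal (min a 1 * min b 1))
    (v w : EuclideanSpace ℝ (Fin (n+1))) (hv : ‖v‖ = 1) (hw : ‖w‖ = 1)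
    (hvw : ⟪v, w⟫ = 0) (a b : ℝ) (ha : 0 < a) (hb : 0 < b) :
    μH[(n:ℝ)] {ω : EuclideanSpace ℝ (Fin (n+1)) | ‖ω‖ = 1 ∧ |⟪ω, v⟫| ≤ a ∧ |⟪ω, w⟫| ≤ b}
      ≤ CE * ENNReal.ofReal (min a 1 * min b 1) := by
  classical
  have hone : (1 : Fin (n+1)) ≠ 0 := by
    have h := fin_val_one n hn
    intro hcontra
    rw [hcontra] at h
    simp at h
  set v' : Fin (n+1) → EuclideanSpace ℝ (Fin (n+1)) := fun i => if i = 0 then v else w with hv'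
  have hortho : Orthonormal ℝ (Set.restrict ({0, 1} : Set (Fin (n+1))) v') := by
    rw [orthonormal_iff_ite]
    rintro ⟨i, hi⟩ ⟨j, hj⟩
    change ⟪v' i, v' j⟫ = _
    have hcases : ∀ x : Fin (n+1), x ∈ ({0, 1} : Set (Fin (n+1))) → x = 0 ∨ x = 1 := by
      intro x hx
      simpa using hx
    have hinner_vv : ⟪v, v⟫ = 1 := by
      rw [real_inner_self_eq_norm_sq, hv]; norm_num
    have hinner_ww : ⟪w, w⟫ = 1 := by
      rw [real_inner_self_eq_norm_sq, hw]; norm_num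
    have hinner_wv : ⟪w, v⟫ = 0 := by rw [real_inner_comm]; exact hvw
    have e0 : v' 0 = v := if_pos rfl
    have e1 : v' 1 = w := if_neg hone
    rcases hcases i hi with rfl | rfl <;> rcases hcases j hj with rfl | rfl
    · rw [if_pos (Subtype.ext rfl), e0]
      exact hinner_vv
    · rw [if_neg (fun hcon => hone (Subtype.ext_iff.mp hcon).symm), e0, e1]
      exact hvw
    · rw [if_neg (fun hcon => hone (Subtype.ext_iff.mp hcon)), e0, e1]
      exact hinner_wv
    · rw [if_pos (Subtype.ext rfl), e1]
      exact hinner_ww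
  obtain ⟨bb, hbb⟩ := hortho.exists_orthonormalBasis_extension_of_card_eq
    (by simp [finrank_euclideanSpace]) 
  have hb0 : bb 0 = v := by
    have := hbb 0 (by simp)
    simpa [hv'] using this
  have hb1 : bb 1 = w := by
    have := hbb 1 (by simp)
    simpa [hv', hone] using this
  set S := {ω : EuclideanSpace ℝ (Fin (n+1)) | ‖ω‖ = 1 ∧ |⟪ω, v⟫| ≤ a ∧ |⟪ω, w⟫| ≤ b} with hS
  have himg : μH[(n:ℝ)] S = μH[(n:ℝ)] (⇑(bb.repr) '' S) :=
    (bb.repr.isometry.hausdorffMeasure_image (Or.inl (by positivity)) S).symm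
  have hsub : ⇑(bb.repr) '' S ⊆
      {ω : EuclideanSpace ℝ (Fin (n+1)) | ‖ω‖ = 1 ∧ |ω 0| ≤ a ∧ |ω 1| ≤ b} := by
    rintro z ⟨ω, ⟨h1, h2, h3⟩, rfl⟩
    refine ⟨by rw [bb.repr.norm_map, h1], ?_, ?_⟩
    · rw [bb.repr_apply_apply, hb0, real_inner_comm]
      exact h2
    · rw [bb.repr_apply_apply, hb1, real_inner_comm]
      exact h3
  calc μH[(n:ℝ)] S = μH[(n:ℝ)] (⇑(bb.repr) '' S) := himg
    _ ≤ μH[(n:ℝ)] {ω : EuclideanSpace ℝ (Fin (n+1)) | ‖ω‖ = 1 ∧ |ω 0| ≤ a ∧ |ω 1| ≤ b} :=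
        measure_mono hsub
    _ ≤ CE * ENNReal.ofReal (min a 1 * min b 1) := hCE a b ha hb

lemma main2 (n : ℕ) (hn : 1 ≤ n) :
    ∃ C > 0, ∀ (v₁ v₂ : EuclideanSpace ℝ (Fin (n+1))), ‖v₁‖ = 1 → ‖v₂‖ = 1 →
      ∀ δ : ℝ, 0 < δ →
      (μH[(n:ℝ)] {ω : EuclideanSpace ℝ (Fin (n+1)) |
            ω ∈ Metric.sphere (0 : EuclideanSpace ℝ (Fin (n+1))) 1 ∧
            |⟪ω, v₁⟫| ≤ δ ∧ |⟪ω, v₂⟫| ≤ δ} ≤ ENNReal.ofReal (C * δ)) ∧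
      (ENNReal.ofReal (Real.sqrt (1 - ⟪v₁, v₂⟫ ^ 2)) *
          μH[(n:ℝ)] {ω : EuclideanSpace ℝ (Fin (n+1)) |
            ω ∈ Metric.sphere (0 : EuclideanSpace ℝ (Fin (n+1))) 1 ∧
            |⟪ω, v₁⟫| ≤ δ ∧ |⟪ω, v₂⟫| ≤ δ} ≤ ENNReal.ofReal (C * δ ^ 2)) := by
  classical
  have hone : (1 : Fin (n+1)) ≠ 0 := by
    have h := fin_val_one n hn
    intro hcontra
    rw [hcontra] at h
    simp at h
  obtain ⟨CE, hCEtop, hCE⟩ := key n hn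
  set CR : ℝ := CE.toReal + 1 with hCRdef
  have hCR : 0 < CR := by positivity
  have hCEle : CE ≤ ENNReal.ofReal CR := by
    rw [← ENNReal.ofReal_toReal hCEtop]
    exact ENNReal.ofReal_le_ofReal (by simp [hCRdef])
  refine ⟨2 * CR, by positivity, ?_⟩
  intro v₁ v₂ hv1 hv2 δ hδ
  set U := {ω : EuclideanSpace ℝ (Fin (n+1)) |
      ω ∈ Metric.sphere (0 : EuclideanSpace ℝ (Fin (n+1))) 1 ∧
      |⟪ω, v₁⟫| ≤ δ ∧ |⟪ω, v₂⟫| ≤ δ} with hU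
  constructor
  · -- first inequality
    -- get a unit vector orthogonal to v₁
    have hortho1 : Orthonormal ℝ
        (Set.restrict ({0} : Set (Fin (n+1))) (fun _ : Fin (n+1) => v₁)) := by
      rw [orthonormal_iff_ite]
      rintro ⟨i, hi⟩ ⟨j, hj⟩
      simp only [Set.mem_singleton_iff] at hi hj
      subst hi; subst hj
      rw [if_pos (Subtype.ext rfl)]
      change ⟪v₁, v₁⟫ = 1
      rw [real_inner_self_eq_norm_sq, hv1]
      norm_num
    obtain ⟨bb, hbb⟩ := hortho1.exists_orthonormalBasis_extension_of_card_eq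
      (by simp [finrank_euclideanSpace])
    have hb0 : bb 0 = v₁ := hbb 0 (by simp)
    set w₀ := bb 1 with hw₀def
    have hw₀ : ‖w₀‖ = 1 := bb.orthonormal.1 1
    have horth0 : ⟪v₁, w₀⟫ = 0 := by
      rw [← hb0]
      exact bb.orthonormal.2 (Ne.symm hone)
    have hU1 : U ⊆ {ω : EuclideanSpace ℝ (Fin (n+1)) |
        ‖ω‖ = 1 ∧ |⟪ω, v₁⟫| ≤ δ ∧ |⟪ω, w₀⟫| ≤ 1} := by
      rintro ω ⟨hsph, h2, _⟩
      have hωn : ‖ω‖ = 1 := mem_sphere_zero_iff_norm.mp hsph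
      refine ⟨hωn, h2, ?_⟩
      calc |⟪ω, w₀⟫| ≤ ‖ω‖ * ‖w₀‖ := abs_real_inner_le_norm ω w₀
        _ = 1 := by rw [hωn, hw₀]; norm_num
    calc μH[(n:ℝ)] U ≤ CE * ENNReal.ofReal (min δ 1 * min 1 1) :=
          (measure_mono hU1).trans
            (transfer n hn CE hCE v₁ w₀ hv1 hw₀ horth0 δ 1 hδ one_pos)
      _ ≤ ENNReal.ofReal CR * ENNReal.ofReal δ := by
          apply mul_le_mul' hCEle
          apply ENNReal.ofReal_le_ofReal
          calc min δ 1 * min 1 1 ≤ δ * 1 :=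
                mul_le_mul (min_le_left _ _) (min_le_left _ _) (by norm_num)  hδ.le
            _ = δ := mul_one δ
      _ = ENNReal.ofReal (CR * δ) := (ENNReal.ofReal_mul hCR.le).symm
      _ ≤ ENNReal.ofReal (2 * CR * δ) := ENNReal.ofReal_le_ofReal (by nlinarith)
  · -- second inequality
    set t : ℝ := ⟪v₁, v₂⟫ with ht
    rcases le_or_gt (1 - t^2) 0 with hcase | hcase
    · have hz : Real.sqrt (1 - t^2) = 0 := Real.sqrt_eq_zero_of_nonpos hcase
      rw [hz]
      simp
    · set s : ℝ := Real.sqrt (1 - t^2) with hsdef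
      have hs : 0 < s := Real.sqrt_pos.mpr hcase
      have hs2 : s^2 = 1 - t^2 := Real.sq_sqrt hcase.le
      have htle : |t| ≤ 1 := by
        have h := abs_real_inner_le_norm v₁ v₂
        rw [hv1, hv2] at h
        simpa using h
      set w : EuclideanSpace ℝ (Fin (n+1)) := s⁻¹ • (v₂ - t • v₁) with hwdef
      have hsub2 : ‖v₂ - t • v₁‖^2 = s^2 := by
        have hsm : ‖t • v₁‖ = |t| := by rw [norm_smul, Real.norm_eq_abs, hv1, mul_one]
        have hcom : (⟪v₂, v₁⟫ : ℝ) = t := by rw [ht]; exact (real_inner_comm v₂ v₁).symm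
        rw [norm_sub_sq_real, real_inner_smul_right, hcom, hsm, hv2, hs2, sq_abs]
        ring
      have hnsub : ‖v₂ - t • v₁‖ = s := by
        have h := congrArg Real.sqrt hsub2
        rwa [Real.sqrt_sq (norm_nonneg _), Real.sqrt_sq hs.le] at h
      have hw : ‖w‖ = 1 := by
        rw [hwdef, norm_smul, Real.norm_eq_abs, abs_of_pos (inv_pos.mpr hs), hnsub]
        field_simp
      have horth : ⟪v₁, w⟫ = 0 := by
        rw [hwdef, real_inner_smul_right, inner_sub_right, real_inner_smul_right,
          real_inner_self_eq_norm_sq, hv1]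
        simp [← ht]
      have hdecomp : ∀ ω : EuclideanSpace ℝ (Fin (n+1)),
          ⟪ω, w⟫ = s⁻¹ * (⟪ω, v₂⟫ - t * ⟪ω, v₁⟫) := by
        intro ω
        rw [hwdef, real_inner_smul_right, inner_sub_right, real_inner_smul_right]
      have hb2δ : 0 < 2*δ/s := by positivity
      have hU2 : U ⊆ {ω : EuclideanSpace ℝ (Fin (n+1)) |
          ‖ω‖ = 1 ∧ |⟪ω, v₁⟫| ≤ δ ∧ |⟪ω, w⟫| ≤ 2*δ/s} := by
        rintro ω ⟨hsph, h2, h3⟩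
        have hωn : ‖ω‖ = 1 := mem_sphere_zero_iff_norm.mp hsph
        refine ⟨hωn, h2, ?_⟩
        rw [hdecomp ω, abs_mul, abs_of_pos (inv_pos.mpr hs)]
        have hnum : |⟪ω, v₂⟫ - t * ⟪ω, v₁⟫| ≤ 2*δ := by
          have habs : |⟪ω, v₂⟫ - t * ⟪ω, v₁⟫| ≤ |⟪ω, v₂⟫| + |t * ⟪ω, v₁⟫| := by
            rw [sub_eq_add_neg]
            exact (abs_add_le _ _).trans_eq (by rw [abs_neg])
          have h5 : |t * ⟪ω, v₁⟫| ≤ δ := by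
            rw [abs_mul]
            calc |t| * |⟪ω, v₁⟫| ≤ 1 * δ :=
                  mul_le_mul htle h2 (abs_nonneg _) zero_le_one
              _ = δ := one_mul δ
          linarith
        rw [div_eq_inv_mul]
        exact mul_le_mul_of_nonneg_left hnum (inv_pos.mpr hs).le
      have bound2 : μH[(n:ℝ)] U ≤ CE * ENNReal.ofReal (min δ 1 * min (2*δ/s) 1) :=
        (measure_mono hU2).trans
          (transfer n hn CE hCE v₁ w hv1 hw horth δ (2*δ/s) hδ hb2δ)
      have hreal : s * (min δ 1 * min (2*δ/s) 1) ≤ 2 * δ^2 := by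
        have hter : s * min (2*δ/s) 1 ≤ 2*δ := by
          rcases min_cases (2*δ/s) 1 with ⟨hmin, _⟩ | ⟨hmin, hle⟩
          · rw [hmin]
            field_simp
            norm_num
          · rw [hmin, mul_one]
            have := (one_le_div hs).mp hle.le
            linarith
        calc s * (min δ 1 * min (2*δ/s) 1) = min δ 1 * (s * min (2*δ/s) 1) := by ring
          _ ≤ δ * (2*δ) := by
              apply mul_le_mul (min_le_left _ _) hter ?_ hδ.le
              have : 0 ≤ min (2*δ/s) 1 := le_min hb2δ.le zero_le_one
              positivity
          _ = 2 * δ^2 := by ring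
      calc ENNReal.ofReal s * μH[(n:ℝ)] U
          ≤ ENNReal.ofReal s * (CE * ENNReal.ofReal (min δ 1 * min (2*δ/s) 1)) :=
            mul_le_mul_right bound2 _
        _ = CE * (ENNReal.ofReal s * ENNReal.ofReal (min δ 1 * min (2*δ/s) 1)) := by ring
        _ = CE * ENNReal.ofReal (s * (min δ 1 * min (2*δ/s) 1)) := by
            rw [ENNReal.ofReal_mul hs.le]
        _ ≤ ENNReal.ofReal CR * ENNReal.ofReal (2 * δ^2) :=
            mul_le_mul' hCEle (ENNReal.ofReal_le_ofReal hreal)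
        _ = ENNReal.ofReal (CR * (2 * δ^2)) := (ENNReal.ofReal_mul hCR.le).symm
        _ = ENNReal.ofReal (2 * CR * δ^2) := by ring_nf


/-- Measure estimate for the set of directions nearly orthogonal to two unit
vectors: `μ(U_δ(v₁,v₂)) ≤ C·min{δ, δ²/sin α(v₁,v₂)}`, stated as the pair of
inequalities `μ(U_δ) ≤ C δ` and `sin α(v₁,v₂)·μ(U_δ) ≤ C δ²`, where
`sin α(v₁,v₂) = √(1 - ⟨v₁,v₂⟩²)` is the sine of the acute angle. -/
theorem stmt1 (d : ℕ) (hd : 2 ≤ d) :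
    ∃ C > 0, ∀ (v₁ v₂ : EuclideanSpace ℝ (Fin d)), ‖v₁‖ = 1 → ‖v₂‖ = 1 →
      ∀ δ : ℝ, 0 < δ →
      (μH[(d:ℝ)-1] {ω : EuclideanSpace ℝ (Fin d) |
            ω ∈ Metric.sphere (0 : EuclideanSpace ℝ (Fin d)) 1 ∧
            |⟪ω, v₁⟫| ≤ δ ∧ |⟪ω, v₂⟫| ≤ δ} ≤ ENNReal.ofReal (C * δ)) ∧
      (ENNReal.ofReal (Real.sqrt (1 - ⟪v₁, v₂⟫ ^ 2)) *
          μH[(d:ℝ)-1] {ω : EuclideanSpace ℝ (Fin d) |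
            ω ∈ Metric.sphere (0 : EuclideanSpace ℝ (Fin d)) 1 ∧
            |⟪ω, v₁⟫| ≤ δ ∧ |⟪ω, v₂⟫| ≤ δ} ≤ ENNReal.ofReal (C * δ ^ 2)) := by
  
  obtain ⟨m, rfl⟩ : ∃ m, d = m + 1 := ⟨d - 1, by omega⟩
  have hm : 1 ≤ m := by omega
  have hexp : ((m+1 : ℕ):ℝ) - 1 = (m:ℝ) := by push_cast; ring
  rw [hexp]
  exact main2 m hm
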